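/- Let k ≥ 2 and s ≥ 2 be integers. Let f, g be formal power series in two variables t, τ over ℂ, let h be a formal power series in one variable x over ℂ whose coefficients of x^i vanish for all i < s and whose coefficient of x^s is nonzero, and set u = τ^k + t·f (a power series with zero constant term, so the substitution h(u) is defined). Then u^{k·s − 1} does not divide t·g − h(u) in ℂ[[t, τ]]. -/

import Mathlib

/-! Compare the coefficients of `τ^(k s)` on both sides, i.e. work modulo `t`. Modulo `t` the
series `u` becomes `τ^k`, so `t g - h(u)` has `τ^(k s)`-coefficient `-h_s ≠ 0`, while every
multiple of `u^(k s - 1)` becomes a multiple of `τ^(k (k s - 1))`, and `k s < k (k s - 1)`. -/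

open MvPowerSeries

theorem dvd_add_mul_pow_sub_pow {R : Type*} [CommRing R] (a b c : R) (n : ℕ) :
    b ∣ (a + b * c) ^ n - a ^ n := by
  have h := sub_dvd_pow_sub_pow (a + b * c) a n
  rw [add_sub_cancel_left] at h
  exact (dvd_mul_right b c).trans h

namespace MvPowerSeries

variable {σ R : Type*}

theorem coeff_eq_of_X_dvd_sub [CommRing R] {i : σ} {m : σ →₀ ℕ} (hm : m i = 0)
    {φ ψ : MvPowerSeries σ R} (h : X i ∣ φ - ψ) : coeff m φ = coeff m ψ :=
  sub_eq_zero.mp (by rw [← map_sub]; exact X_dvd_iff.mp h m hm)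

theorem coeff_single_X_pow_pow [Semiring R] [DecidableEq σ] (i : σ) {k : ℕ} (hk : k ≠ 0)
    (s n : ℕ) :
    coeff (Finsupp.single i (k * s)) (((X i : MvPowerSeries σ R) ^ k) ^ n) =
      if n = s then 1 else 0 := by
  simp only [← pow_mul, coeff_X_pow, (Finsupp.single_injective i).eq_iff,
    Nat.mul_left_cancel_iff (Nat.pos_of_ne_zero hk), eq_comm]

theorem coeff_single_X_pow_mul_of_lt [Semiring R] [DecidableEq σ] (i : σ) {n N : ℕ}
    (h : n < N) (φ : MvPowerSeries σ R) :
    coeff (Finsupp.single i n) ((X i : MvPowerSeries σ R) ^ N * φ) = 0 :=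
  X_pow_dvd_iff.mp (dvd_mul_right _ φ) _ (by simpa using h)

end MvPowerSeries

theorem stmt10_general (k s : ℕ) (hk : 2 ≤ k) (hs : 2 ≤ s)
    (f g : MvPowerSeries (Fin 2) ℂ) (h : PowerSeries ℂ)
    (hcoeff : PowerSeries.coeff s h ≠ 0)
    (u : MvPowerSeries (Fin 2) ℂ)
    (hu : u = (X 1 : MvPowerSeries (Fin 2) ℂ) ^ k + (X 0 : MvPowerSeries (Fin 2) ℂ) * f)
    (H : MvPowerSeries (Fin 2) ℂ)
    (hH : ∀ m : Fin 2 →₀ ℕ,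
      (coeff m) H =
        ∑ i ∈ Finset.range (m 0 + m 1 + 1),
          PowerSeries.coeff i h * (coeff m) (u ^ i)) :
    ¬ (u ^ (k * s - 1) ∣ (X 0 : MvPowerSeries (Fin 2) ℂ) * g - H) := by
  rintro ⟨q, hq⟩
  set m : Fin 2 →₀ ℕ := Finsupp.single 1 (k * s)
  have hm0 : m 0 = 0 := by simp [m]
  have hk0 : k ≠ 0 := by omega
  have hu_mod_t (n : ℕ) : X 0 ∣ u ^ n - (X 1 ^ k) ^ n := hu ▸ dvd_add_mul_pow_sub_pow _ _ f n
  have hHm : coeff m H = PowerSeries.coeff s h := by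
    rw [hH m, Finset.sum_eq_single s]
    · rw [coeff_eq_of_X_dvd_sub hm0 (hu_mod_t s), coeff_single_X_pow_pow 1 hk0, if_pos rfl,
        mul_one]
    · intro i _ his
      rw [coeff_eq_of_X_dvd_sub hm0 (hu_mod_t i), coeff_single_X_pow_pow 1 hk0, if_neg his,
        mul_zero]
    · intro hsm
      exact (hsm (Finset.mem_range.mpr (by simp [m]; nlinarith))).elim
  have hqm : coeff m (u ^ (k * s - 1) * q) = 0 := by
    have hlt : k * s < k * (k * s - 1) := by
      have : 2 * (k * s - 1) ≤ k * (k * s - 1) := Nat.mul_le_mul_right _ hk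
      have : 4 ≤ k * s := by nlinarith
      omega
    rw [coeff_eq_of_X_dvd_sub hm0 (sub_mul (u ^ (k * s - 1)) _ q ▸ (hu_mod_t _).mul_right q),
      ← pow_mul]
    exact coeff_single_X_pow_mul_of_lt 1 hlt q
  have hXg : coeff m (X 0 * g) = 0 := X_dvd_iff.mp (dvd_mul_right _ _) m hm0
  have hcoeff_eq := congrArg (coeff m) hq
  rw [map_sub, hXg, hHm, hqm, zero_sub, neg_eq_zero] at hcoeff_eq
  exact hcoeff hcoeff_eq

/-- Non-cancellation step in the proof of Proposition 2.2 ruling out tangency order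
`s > 1` at the totally ramified point of a `k`-fold cover.  Here `t = X 0` and
`τ = X 1` are the two variables, `u = τ^k + t·f`, and `H` is the substitution `h(u)`
of `u` into the one-variable power series `h` (characterized coefficientwise: since
`u` has zero constant term, `coeff m (u^i) = 0` for `i > m 0 + m 1`, so the defining
sum is finite).  The conclusion is that `u^{k·s-1}` does not divide `t·g - h(u)`. -/
theorem stmt10 (k s : ℕ) (hk : 2 ≤ k) (hs : 2 ≤ s)
    (f g : MvPowerSeries (Fin 2) ℂ) (h : PowerSeries ℂ)
    (hvanish : ∀ i < s, PowerSeries.coeff i h = 0)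
    (hcoeff : PowerSeries.coeff s h ≠ 0)
    (u : MvPowerSeries (Fin 2) ℂ)
    (hu : u = (X 1 : MvPowerSeries (Fin 2) ℂ) ^ k + (X 0 : MvPowerSeries (Fin 2) ℂ) * f)
    (H : MvPowerSeries (Fin 2) ℂ)
    (hH : ∀ m : Fin 2 →₀ ℕ,
      (coeff m) H =
        ∑ i ∈ Finset.range (m 0 + m 1 + 1),
          PowerSeries.coeff i h * (coeff m) (u ^ i)) :
    ¬ (u ^ (k * s - 1) ∣ (X 0 : MvPowerSeries (Fin 2) ℂ) * g - H) :=
  stmt10_general k s hk hs f g h hcoeff u hu H hH
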